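/- arXiv:1308.5543 — 2 statements merged into one kernel-verified Lean document; each statement's English description precedes it below -/
import Mathlib

section
/- For every x ∈ Q_m and every compact set K ⊂ V′ there exist a constant C > 0 and a positive integer q such that for every y ∈ Q_m whose frequency vector, written in the coordinates (ρ_0,…,ρ_{m−2}) ∈ ℝ^{m−1}, lies in K, one has |H_m(y) − H_m(x)| ≥ C · (dist(ρ(y), Z_x))^q, where Z_x = {η ∈ V′ : Δ(η) = H_m(x)} and dist denotes Euclidean infimum distance in ℝ^{m−1}. In particular, if H_m(y) = H_m(x) then the frequency vector of y lies in the level set Z_x of the real-analytic function Δ. -/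
/-!
For `w ∈ V'` the map `t ↦ ∑ᵢ wᵢ log ∑ⱼ γᵢⱼ ^ t` (last weight `1 - ∑ wᵢ`) is strictly decreasing
on `(θ, ∞)`, so `Δ w = c` exactly when it vanishes at `t = c`. For fixed `c` this condition is
affine in `w`: the level set `Z_x` is the slice of `V'` by a hyperplane. The distance from `η ∈ K`
to that hyperplane is proportional to the value of the affine function at `η`, and since `η` lies
on the level `Δ η` of the same family, the Lipschitz continuity of `t ↦ log ∑ⱼ γᵢⱼ ^ t` on compact
subintervals of `(θ, ∞)` bounds that value by `O(|Δ η - c|)`. Feet of perpendiculars leaving `V'`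
are far from `K`, and are handled by compactness. So the inequality holds with `q = 1`.
-/

open Real Filter

/-- The `k+1`-st digit of `x` in the `m`-ary expansion, obtained by iterating
`T_m y = m·y - ⌊m·y⌋`. -/
noncomputable def mDigit (m k : ℕ) (x : ℝ) : ℤ :=
  ⌊(m : ℝ) * (fun y => Int.fract ((m : ℝ) * y))^[k] x⌋

/-- The set `F(p)` of `p`-quasinormal numbers in `[0,1)` for the `m`-ary expansion. -/
def mFreqSet (m : ℕ) (p : ℕ → ℝ) : Set ℝ :=
  {x ∈ Set.Ico (0 : ℝ) 1 | ∀ i < m,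
    Tendsto (fun n => (((Finset.range n).filter
        (fun k => mDigit m k x = (i : ℤ))).card : ℝ) / n) atTop (nhds (p i))}

/-- The first `m-1` coordinates of a stochastic vector, as a point of `ℝ^{m-1}`. -/
def freqProj (m : ℕ) (p : ℕ → ℝ) : EuclideanSpace ℝ (Fin (m - 1)) :=
  WithLp.toLp 2 (fun i : Fin (m - 1) => p i)

open Set Metric

lemma lipschitzOnWith_log_Ici {r : ℝ} (hr : 0 < r) :
    LipschitzOnWith (r⁻¹).toNNReal log (Ici r) := by
  refine LipschitzOnWith.of_le_add_mul' _ fun x hx y hy => ?_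
  have hx0 : 0 < x := hr.trans_le hx
  have hy0 : 0 < y := hr.trans_le hy
  rcases le_total x y with hxy | hyx
  · linarith [log_le_log hx0 hxy, (by positivity : 0 ≤ r⁻¹ * dist x y)]
  · calc log x = log y + log (x / y) := by rw [log_div hx0.ne' hy0.ne']; ring
      _ ≤ log y + (x / y - 1) := by gcongr; exact log_le_sub_one_of_pos (by positivity)
      _ = log y + (x - y) / y := by field_simp
      _ ≤ log y + r⁻¹ * dist x y := by
        rw [dist_eq, abs_of_nonneg (by linarith), div_eq_inv_mul]
        gcongr
        exact hy

lemma rpow_sub_rpow_le_mul_neg_log {x a s t : ℝ} (hx0 : 0 < x) (hx1 : x ≤ 1)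
    (has : a ≤ s) (hst : s ≤ t) : x ^ s - x ^ t ≤ x ^ a * -log x * (t - s) := by
  have htangent : x ^ s * (log x * (t - s) + 1) ≤ x ^ t := by
    rw [rpow_def_of_pos hx0, rpow_def_of_pos hx0]
    calc exp (log x * s) * (log x * (t - s) + 1) ≤ exp (log x * s) * exp (log x * (t - s)) := by
          gcongr; exact add_one_le_exp _
      _ = exp (log x * t) := by rw [← exp_add]; ring_nf
  have hmono : x ^ s ≤ x ^ a := rpow_le_rpow_of_exponent_ge hx0 hx1 has
  have hlog : 0 ≤ -log x * (t - s) :=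
    mul_nonneg (neg_nonneg.2 (log_nonpos hx0.le hx1)) (sub_nonneg.2 hst)
  nlinarith

lemma rpow_mul_neg_log_nonneg {x : ℝ} (hx0 : 0 < x) (hx1 : x ≤ 1) (a : ℝ) :
    0 ≤ x ^ a * -log x :=
  mul_nonneg (rpow_pos_of_pos hx0 a).le (neg_nonneg.2 (log_nonpos hx0.le hx1))

section RpowSeries

variable {g : ℕ → ℝ}

lemma summable_rpow_of_le (hpos : ∀ j, 0 < g j) (hle : ∀ j, g j ≤ 1) {s t : ℝ} (hst : s ≤ t)
    (hs : Summable fun j => g j ^ s) : Summable fun j => g j ^ t :=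
  hs.of_nonneg_of_le (fun j => (rpow_pos_of_pos (hpos j) t).le)
    (fun j => rpow_le_rpow_of_exponent_ge (hpos j) (hle j) hst)

lemma summable_rpow_of_sInf_lt (hpos : ∀ j, 0 < g j) (hle : ∀ j, g j ≤ 1) (hg : Summable g)
    {t : ℝ} (ht : sInf {s : ℝ | 0 < s ∧ Summable fun j => g j ^ s} < t) :
    Summable fun j => g j ^ t := by
  have hne : {s : ℝ | 0 < s ∧ Summable fun j => g j ^ s}.Nonempty := ⟨1, one_pos, by simpa using hg⟩
  obtain ⟨s, ⟨-, hs⟩, hst⟩ := exists_lt_of_csInf_lt hne ht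
  exact summable_rpow_of_le hpos hle hst.le hs

lemma tsum_rpow_pos (hpos : ∀ j, 0 < g j) {t : ℝ} (ht : Summable fun j => g j ^ t) :
    0 < ∑' j, g j ^ t :=
  ht.tsum_pos (fun j => (rpow_pos_of_pos (hpos j) t).le) 0 (rpow_pos_of_pos (hpos 0) t)

lemma strictAntiOn_log_tsum_rpow (hpos : ∀ j, 0 < g j) (hlt : ∀ j, g j < 1) :
    StrictAntiOn (fun t : ℝ => log (∑' j, g j ^ t)) {t : ℝ | Summable fun j => g j ^ t} := by
  have htsum : StrictAntiOn (fun t : ℝ => ∑' j, g j ^ t) {t : ℝ | Summable fun j => g j ^ t} :=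
    fun s hs t ht hst => Summable.tsum_lt_tsum (i := 0)
      (fun j => rpow_le_rpow_of_exponent_ge (hpos j) (hlt j).le hst.le)
      (rpow_lt_rpow_of_exponent_gt (hpos 0) (hlt 0) hst) ht hs
  exact strictMonoOn_log.comp_strictAntiOn htsum fun t ht => tsum_rpow_pos hpos ht

lemma summable_rpow_mul_neg_log (hpos : ∀ j, 0 < g j) (hle : ∀ j, g j ≤ 1) {a' a : ℝ}
    (ha : a' < a) (hs : Summable fun j => g j ^ a') :
    Summable fun j => g j ^ a * -log (g j) := by
  refine (hs.div_const (a - a')).of_nonneg_of_le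
    (fun j => rpow_mul_neg_log_nonneg (hpos j) (hle j) a) fun j => ?_
  have hε : 0 < a - a' := sub_pos.2 ha
  -- `log y ≤ y ^ ε / ε` at `y = (g j)⁻¹`
  have hlog : -log (g j) ≤ (g j ^ (a - a'))⁻¹ / (a - a') := by
    simpa [log_inv, inv_rpow (hpos j).le] using log_le_rpow_div (inv_nonneg.2 (hpos j).le) hε
  calc g j ^ a * -log (g j) ≤ g j ^ a * ((g j ^ (a - a'))⁻¹ / (a - a')) :=
        mul_le_mul_of_nonneg_left hlog (rpow_pos_of_pos (hpos j) a).le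
    _ = g j ^ a' / (a - a') := by
        rw [← rpow_neg (hpos j).le, mul_div_assoc', ← rpow_add (hpos j)]; ring_nf

lemma lipschitzOnWith_tsum_rpow (hpos : ∀ j, 0 < g j) (hle : ∀ j, g j ≤ 1) {a' a : ℝ}
    (ha : a' < a) (hs : Summable fun j => g j ^ a') :
    LipschitzOnWith (∑' j, g j ^ a * -log (g j)).toNNReal (fun t : ℝ => ∑' j, g j ^ t) (Ici a) := by
  have hsumm : ∀ t, a ≤ t → Summable fun j => g j ^ t :=
    fun t ht => summable_rpow_of_le hpos hle (ha.le.trans ht) hs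
  refine LipschitzOnWith.of_le_add_mul' _ fun x hx y hy => ?_
  have hB : 0 ≤ (∑' j, g j ^ a * -log (g j)) * dist x y :=
    mul_nonneg (tsum_nonneg fun j => rpow_mul_neg_log_nonneg (hpos j) (hle j) a) dist_nonneg
  rcases le_total y x with hyx | hxy
  · have := Summable.tsum_le_tsum (fun j => rpow_le_rpow_of_exponent_ge (hpos j) (hle j) hyx)
      (hsumm x hx) (hsumm y hy)
    linarith
  · have := Summable.tsum_le_tsum
      (fun j => rpow_sub_rpow_le_mul_neg_log (hpos j) (hle j) (mem_Ici.1 hx) hxy)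
      ((hsumm x hx).sub (hsumm y hy))
      ((summable_rpow_mul_neg_log hpos hle ha hs).mul_right (y - x))
    rw [(hsumm x hx).tsum_sub (hsumm y hy), tsum_mul_right] at this
    rw [dist_comm, dist_eq, abs_of_nonneg (sub_nonneg.2 hxy)]
    linarith

lemma exists_lipschitzOnWith_log_tsum_rpow (hpos : ∀ j, 0 < g j) (hle : ∀ j, g j ≤ 1)
    {a' a b : ℝ} (ha : a' < a) (hab : a ≤ b) (hs : Summable fun j => g j ^ a') :
    ∃ M, LipschitzOnWith M (fun t : ℝ => log (∑' j, g j ^ t)) (Icc a b) := by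
  have hb : Summable fun j => g j ^ b := summable_rpow_of_le hpos hle (ha.le.trans hab) hs
  refine ⟨_, (lipschitzOnWith_log_Ici (tsum_rpow_pos hpos hb)).comp
    ((lipschitzOnWith_tsum_rpow hpos hle ha hs).mono Icc_subset_Ici_self) fun t ht => ?_⟩
  exact Summable.tsum_le_tsum (fun j => rpow_le_rpow_of_exponent_ge (hpos j) (hle j) ht.2) hb
    (summable_rpow_of_le hpos hle (ha.le.trans ht.1) hs)

end RpowSeries

lemma exists_mul_infDist_le_abs_inner_add {E : Type*} [NormedAddCommGroup E]
    [InnerProductSpace ℝ E] {U K : Set E} (hU : IsOpen U) (hKU : K ⊆ U) (hK : IsCompact K)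
    (v : E) (β : ℝ) :
    ∃ C > 0, ∀ η ∈ K, C * infDist η {w ∈ U | inner ℝ w v + β = 0} ≤ |inner ℝ η v + β| := by
  set Z := {w ∈ U | inner ℝ w v + β = 0}
  rcases Z.eq_empty_or_nonempty with hZ | ⟨ξ, hξ⟩
  · exact ⟨1, one_pos, fun η _ => by simp [hZ]⟩
  rcases eq_or_ne v 0 with rfl | hv
  · have hβ : β = 0 := by simpa using hξ.2
    refine ⟨1, one_pos, fun η hη => ?_⟩
    rw [infDist_zero_of_mem (show η ∈ Z from ⟨hKU hη, by simp [hβ]⟩)]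
    simp
  obtain ⟨δ, hδ, hthick⟩ := hK.exists_thickening_subset_open hU hKU
  obtain ⟨D, hD, hKD⟩ := hK.isBounded.subset_closedBall_lt 0 ξ
  have hnv : 0 < ‖v‖ := norm_pos_iff.2 hv
  refine ⟨min ‖v‖ (δ * ‖v‖ / D), by positivity, fun η hη => ?_⟩
  set A := inner ℝ η v + β
  -- the orthogonal projection of `η` onto the hyperplane `⟪w, v⟫ + β = 0`
  set ζ := η - (A / ‖v‖ ^ 2) • v
  have hζ : inner ℝ ζ v + β = 0 := by
    rw [inner_sub_left, real_inner_smul_left, real_inner_self_eq_norm_sq]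
    field_simp
    ring
  have hdist : dist η ζ = |A| / ‖v‖ := by
    rw [dist_eq_norm, sub_sub_cancel, norm_smul, norm_div, norm_pow, norm_norm,
      Real.norm_eq_abs]
    field_simp
  have hinf : 0 ≤ infDist η Z := infDist_nonneg
  rcases lt_or_ge (dist η ζ) δ with hnear | hfar
  · have hζZ : ζ ∈ Z := ⟨hthick (mem_thickening_iff.2 ⟨η, hη, by rwa [dist_comm]⟩), hζ⟩
    calc min ‖v‖ (δ * ‖v‖ / D) * infDist η Z ≤ ‖v‖ * (|A| / ‖v‖) := by
          gcongr
          · exact min_le_left _ _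
          · exact hdist ▸ infDist_le_dist_of_mem hζZ
      _ = |A| := by field_simp
  · calc min ‖v‖ (δ * ‖v‖ / D) * infDist η Z ≤ δ * ‖v‖ / D * D := by
          gcongr
          · exact min_le_right _ _
          · exact (infDist_le_dist_of_mem hξ).trans (mem_closedBall.1 (hKD hη))
      _ ≤ |A| := by
          rw [hdist, le_div_iff₀ hnv] at hfar
          rwa [div_mul_cancel₀ _ hD.ne']

noncomputable def stochasticMix (n : ℕ) (L : ℕ → ℝ → ℝ) (w : EuclideanSpace ℝ (Fin n))
    (t : ℝ) : ℝ :=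
  ∑ i : Fin n, w i * L i t + (1 - ∑ i, w i) * L n t

section StochasticMix

variable {n : ℕ} {L : ℕ → ℝ → ℝ} {w : EuclideanSpace ℝ (Fin n)}

lemma stochasticMix_eq_inner (t : ℝ) :
    stochasticMix n L w t = inner ℝ w (WithLp.toLp 2 fun i : Fin n => L i t - L n t) + L n t := by
  simp only [stochasticMix, PiLp.inner_apply, RCLike.inner_apply, conj_trivial, sub_mul,
    Finset.sum_sub_distrib, ← Finset.mul_sum]
  simp only [mul_comm (L _ t)]
  ring

lemma strictAntiOn_stochasticMix {s : Set ℝ} (hw₀ : ∀ i, 0 ≤ w i) (hw₁ : ∑ i, w i < 1)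
    (hL : ∀ i ≤ n, StrictAntiOn (L i) s) : StrictAntiOn (stochasticMix n L w) s := by
  intro x hx y hy hxy
  have hsum : ∑ i : Fin n, w i * L i y ≤ ∑ i : Fin n, w i * L i x :=
    Finset.sum_le_sum fun i _ =>
      mul_le_mul_of_nonneg_left ((hL i i.2.le).le_iff_ge hy hx |>.2 hxy.le) (hw₀ i)
  have hlast : (1 - ∑ i, w i) * L n y < (1 - ∑ i, w i) * L n x :=
    mul_lt_mul_of_pos_left (hL n le_rfl hx hy hxy) (sub_pos.2 hw₁)
  simp only [stochasticMix]
  linarith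

lemma lipschitzOnWith_stochasticMix {s : Set ℝ} {M : NNReal} (hw₀ : ∀ i, 0 ≤ w i)
    (hw₁ : ∑ i, w i ≤ 1) (hL : ∀ i ≤ n, LipschitzOnWith M (L i) s) :
    LipschitzOnWith M (stochasticMix n L w) s := by
  refine LipschitzOnWith.of_dist_le_mul fun x hx y hy => ?_
  have hterm : ∀ i ≤ n, ∀ c, 0 ≤ c → |c * (L i x - L i y)| ≤ c * (M * dist x y) := by
    intro i hi c hc
    rw [abs_mul, abs_of_nonneg hc]
    exact mul_le_mul_of_nonneg_left ((hL i hi).dist_le_mul x hx y hy) hc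
  calc dist (stochasticMix n L w x) (stochasticMix n L w y)
      = |∑ i : Fin n, w i * (L i x - L i y) + (1 - ∑ i, w i) * (L n x - L n y)| := by
        rw [dist_eq]; congr 1
        simp only [stochasticMix, mul_sub, Finset.sum_sub_distrib]; ring
    _ ≤ ∑ i : Fin n, w i * (M * dist x y) + (1 - ∑ i, w i) * (M * dist x y) :=
        (abs_add_le _ _).trans <| add_le_add
          ((Finset.abs_sum_le_sum_abs _ _).trans
            (Finset.sum_le_sum fun i _ => hterm i i.2.le _ (hw₀ i)))
          (hterm n le_rfl _ (sub_nonneg.2 hw₁))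
    _ = M * dist x y := by rw [← Finset.sum_mul]; ring

end StochasticMix

lemma exists_mul_infDist_levelSet_le {n : ℕ} {θ c : ℝ} {L : ℕ → ℝ → ℝ}
    {V K : Set (EuclideanSpace ℝ (Fin n))} {Δ : EuclideanSpace ℝ (Fin n) → ℝ}
    (hV : IsOpen V) (hVsimplex : ∀ w ∈ V, (∀ i, 0 ≤ w i) ∧ ∑ i, w i < 1)
    (hKV : K ⊆ V) (hK : IsCompact K)
    (hΔ : ∀ w ∈ V, θ < Δ w ∧ stochasticMix n L w (Δ w) = 0) (hΔcont : ContinuousOn Δ V)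
    (hanti : ∀ i ≤ n, StrictAntiOn (L i) (Ioi θ))
    (hlip : ∀ i ≤ n, ∀ a b, θ < a → a ≤ b → ∃ M, LipschitzOnWith M (L i) (Icc a b))
    (hc : θ < c) :
    ∃ C > 0, ∀ η ∈ K, C * infDist η {w ∈ V | Δ w = c} ≤ |Δ η - c| := by
  set v : EuclideanSpace ℝ (Fin n) := WithLp.toLp 2 fun i => L i c - L n c
  -- `stochasticMix n L w` is strictly decreasing, so `Δ w = c` iff it vanishes at `c`
  have hmix_eq : ∀ w, stochasticMix n L w c = inner ℝ w v + L n c :=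
    fun w => stochasticMix_eq_inner c
  have hZ : {w ∈ V | Δ w = c} = {w ∈ V | inner ℝ w v + L n c = 0} := by
    ext w
    simp only [mem_ofPred_eq, ← hmix_eq, and_congr_right_iff]
    intro hw
    refine ⟨fun h => h ▸ (hΔ w hw).2, fun h => ?_⟩
    exact (strictAntiOn_stochasticMix (hVsimplex w hw).1 (hVsimplex w hw).2 hanti).injOn
      (hΔ w hw).1 hc (((hΔ w hw).2).trans h.symm)
  obtain ⟨C, hC, hCK⟩ := exists_mul_infDist_le_abs_inner_add hV hKV hK v (L n c)
  have hT : IsCompact (insert c (Δ '' K)) := (hK.image_of_continuousOn (hΔcont.mono hKV)).insert c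
  obtain ⟨a, haT, ha⟩ := hT.exists_isLeast (insert_nonempty _ _)
  obtain ⟨b, hb⟩ := hT.bddAbove
  have hθa : θ < a := by
    rcases haT with rfl | ⟨η, hη, rfl⟩
    exacts [hc, (hΔ η (hKV hη)).1]
  have hTab : insert c (Δ '' K) ⊆ Icc a b := fun t ht => ⟨ha ht, hb ht⟩
  have hab : a ≤ b := (hTab haT).2
  choose! M hM using fun i (hi : i ≤ n) => hlip i hi a b hθa hab
  set M' := ∑ i ∈ Finset.range (n + 1), M i
  have hM' : ∀ i ≤ n, LipschitzOnWith M' (L i) (Icc a b) := fun i hi =>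
    (hM i hi).weaken (Finset.single_le_sum (fun _ _ => zero_le)
      (Finset.mem_range.2 (Nat.lt_succ_of_le hi)))
  refine ⟨C / (M' + 1), by positivity, fun η hη => ?_⟩
  have hηV := hKV hη
  have hcT : c ∈ Icc a b := hTab (mem_insert _ _)
  have hηT : Δ η ∈ Icc a b := hTab (mem_insert_of_mem _ ⟨η, hη, rfl⟩)
  have hmix : |inner ℝ η v + L n c| ≤ M' * |Δ η - c| := by
    have := (lipschitzOnWith_stochasticMix (hVsimplex η hηV).1 (hVsimplex η hηV).2.le
      hM').dist_le_mul _ hcT _ hηT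
    rwa [(hΔ η hηV).2, dist_zero_right, Real.norm_eq_abs, hmix_eq, dist_comm, dist_eq] at this
  calc C / (M' + 1) * infDist η {w ∈ V | Δ w = c}
      = C * infDist η {w ∈ V | inner ℝ w v + L n c = 0} / (M' + 1) := by rw [hZ]; ring
    _ ≤ M' * |Δ η - c| / (M' + 1) := by
        gcongr ?_ / _
        exact (hCK η hη).trans hmix
    _ ≤ |Δ η - c| := by
        rw [div_le_iff₀ (by positivity)]
        nlinarith [abs_nonneg (Δ η - c)]

lemma isOpen_setOf_pos_sum_lt_one (n : ℕ) :
    IsOpen {p : EuclideanSpace ℝ (Fin n) | (∀ i, 0 < p i) ∧ ∑ i, p i < 1} := by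
  simp only [ofPred_and, ofPred_forall]
  exact (isOpen_iInter_of_finite fun i => isOpen_lt continuous_const (by fun_prop)).inter
    (isOpen_lt (by fun_prop) continuous_const)

lemma freqProj_mem_setOf_pos_sum_lt_one {m : ℕ} {ρ : ℕ → ℝ} (hρ₀ : ∀ i < m, 0 < ρ i)
    (hρ₁ : ∑ i ∈ Finset.range m, ρ i = 1) :
    freqProj m ρ ∈ {p : EuclideanSpace ℝ (Fin (m - 1)) | (∀ i, 0 < p i) ∧ ∑ i, p i < 1} := by
  obtain ⟨n, rfl⟩ : ∃ n, m = n + 1 := Nat.exists_eq_succ_of_ne_zero (by rintro rfl; simp at hρ₁)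
  rw [Finset.sum_range_succ] at hρ₁
  refine ⟨fun i => hρ₀ i (by omega), ?_⟩
  have hlast := hρ₀ n n.lt_succ_self
  simp only [freqProj, Nat.add_sub_cancel, Fin.sum_univ_eq_sum_range (fun i => ρ i)]
  linarith

theorem Hm_oscillation_general
    (m : ℕ) (γ : ℕ → ℕ → ℝ)
    (hγpos : ∀ i < m, ∀ j, 0 < γ i j)
    (hγsum : ∀ i < m, Summable (fun j => γ i j))
    (hγsup : ∃ C : ℝ, C < 1 ∧ ∀ i < m, ∀ j, γ i j ≤ C)
    (θ : ℝ)
    (hθ : θ = ⨆ i : Fin m, sInf {t : ℝ | 0 < t ∧ Summable (fun j => γ i j ^ t)})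
    (V' : Set (EuclideanSpace ℝ (Fin (m - 1))))
    (hV' : V' = {p | (∀ i, 0 < p i) ∧ ∑ i, p i < 1})
    (Δ : EuclideanSpace ℝ (Fin (m - 1)) → ℝ)
    (hΔ : ∀ p ∈ V', θ < Δ p ∧
      (∑ i : Fin (m - 1), p i * Real.log (∑' j, γ i j ^ (Δ p)))
        + (1 - ∑ i, p i) * Real.log (∑' j, γ (m - 1) j ^ (Δ p)) = 0)
    (hΔan : AnalyticOnNhd ℝ Δ V')
    (Q : Set ℝ)
    (hQ : Q = {x | ∃ p : ℕ → ℝ, (∀ i < m, 0 < p i) ∧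
      (∑ i ∈ Finset.range m, p i = 1) ∧ x ∈ mFreqSet m p})
    (H : ℝ → ℝ)
    (hH : ∀ p : ℕ → ℝ, (∀ i < m, 0 < p i) → (∑ i ∈ Finset.range m, p i = 1) →
      ∀ x ∈ mFreqSet m p, H x = Δ (freqProj m p)) :
    ∀ x ∈ Q, ∀ K ⊆ V', IsCompact K →
      (∃ C : ℝ, 0 < C ∧ ∃ q : ℕ, 0 < q ∧
        ∀ ρ : ℕ → ℝ, (∀ i < m, 0 < ρ i) → (∑ i ∈ Finset.range m, ρ i = 1) →
          freqProj m ρ ∈ K → ∀ y ∈ mFreqSet m ρ,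
            C * Metric.infDist (freqProj m ρ) {p' ∈ V' | Δ p' = H x} ^ q ≤ |H y - H x|) ∧
      (∀ ρ : ℕ → ℝ, (∀ i < m, 0 < ρ i) → (∑ i ∈ Finset.range m, ρ i = 1) →
        ∀ y ∈ mFreqSet m ρ, H y = H x → freqProj m ρ ∈ {p' ∈ V' | Δ p' = H x}) := by
  intro x hx K hKV hK
  obtain ⟨p, hp₀, hp₁, hxp⟩ := hQ ▸ hx
  have hm : m ≠ 0 := by rintro rfl; simp at hp₁
  obtain ⟨Cγ, hCγ, hγC⟩ := hγsup
  have hγlt : ∀ i < m, ∀ j, γ i j < 1 := fun i hi j => (hγC i hi j).trans_lt hCγ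
  have hsumm : ∀ i < m, ∀ t, θ < t → Summable fun j => γ i j ^ t := fun i hi t ht =>
    summable_rpow_of_sInf_lt (hγpos i hi) (fun j => (hγlt i hi j).le) (hγsum i hi)
      ((hθ ▸ le_ciSup (finite_range _).bddAbove (⟨i, hi⟩ : Fin m)).trans_lt ht)
  have hfreq : ∀ ρ : ℕ → ℝ, (∀ i < m, 0 < ρ i) → ∑ i ∈ Finset.range m, ρ i = 1 →
      freqProj m ρ ∈ V' := fun ρ hρ₀ hρ₁ => hV' ▸ freqProj_mem_setOf_pos_sum_lt_one hρ₀ hρ₁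
  have hHx : H x = Δ (freqProj m p) := hH p hp₀ hp₁ x hxp
  obtain ⟨C, hC, hCK⟩ := exists_mul_infDist_levelSet_le (L := fun i t => log (∑' j, γ i j ^ t))
    (c := H x) (hV' ▸ isOpen_setOf_pos_sum_lt_one _)
    (fun w hw => by rw [hV'] at hw; exact ⟨fun i => (hw.1 i).le, hw.2⟩) hKV hK hΔ
    hΔan.continuousOn
    (fun i hi => (strictAntiOn_log_tsum_rpow (hγpos i (by omega)) (hγlt i (by omega))).mono
      fun t => hsumm i (by omega) t)
    (fun i hi a b ha hab => by
      obtain ⟨a', hθa', ha'a⟩ := exists_between ha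
      exact exists_lipschitzOnWith_log_tsum_rpow (hγpos i (by omega))
        (fun j => (hγlt i (by omega) j).le) ha'a hab (hsumm i (by omega) a' hθa'))
    (hHx ▸ (hΔ _ (hfreq p hp₀ hp₁)).1)
  refine ⟨⟨C, hC, 1, one_pos, fun ρ hρ₀ hρ₁ hρK y hy => ?_⟩,
    fun ρ hρ₀ hρ₁ y hy hyx => ⟨hfreq ρ hρ₀ hρ₁, ?_⟩⟩
  · rw [pow_one, hH ρ hρ₀ hρ₁ y hy]
    exact hCK _ hρK
  · rw [← hH ρ hρ₀ hρ₁ y hy, hyx]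

/-- Łojasiewicz-type lower bound for the oscillation of `H_m` in terms of the
distance of the frequency vector to the level set `Z_x` of the real-analytic function `Δ`;
in particular `H_m(y) = H_m(x)` forces the frequency vector of `y` to lie on `Z_x`. -/
theorem Hm_oscillation
    (m : ℕ) (hm : 2 ≤ m) (γ : ℕ → ℕ → ℝ)
    (hγpos : ∀ i < m, ∀ j, 0 < γ i j)
    (hγsum : ∀ i < m, Summable (fun j => γ i j))
    (hγsup : ∃ C : ℝ, C < 1 ∧ ∀ i < m, ∀ j, γ i j ≤ C)
    (θ : ℝ)
    (hθ : θ = ⨆ i : Fin m, sInf {t : ℝ | 0 < t ∧ Summable (fun j => γ i j ^ t)})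
    (hdiv : ∃ i₀ < m, ¬ Summable (fun j => γ i₀ j ^ θ))
    (V' : Set (EuclideanSpace ℝ (Fin (m - 1))))
    (hV' : V' = {p | (∀ i, 0 < p i) ∧ ∑ i, p i < 1})
    (Δ : EuclideanSpace ℝ (Fin (m - 1)) → ℝ)
    (hΔ : ∀ p ∈ V', θ < Δ p ∧
      (∑ i : Fin (m - 1), p i * Real.log (∑' j, γ i j ^ (Δ p)))
        + (1 - ∑ i, p i) * Real.log (∑' j, γ (m - 1) j ^ (Δ p)) = 0)
    (hΔan : AnalyticOnNhd ℝ Δ V')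
    (Q : Set ℝ)
    (hQ : Q = {x | ∃ p : ℕ → ℝ, (∀ i < m, 0 < p i) ∧
      (∑ i ∈ Finset.range m, p i = 1) ∧ x ∈ mFreqSet m p})
    (H : ℝ → ℝ)
    (hH : ∀ p : ℕ → ℝ, (∀ i < m, 0 < p i) → (∑ i ∈ Finset.range m, p i = 1) →
      ∀ x ∈ mFreqSet m p, H x = Δ (freqProj m p)) :
    ∀ x ∈ Q, ∀ K ⊆ V', IsCompact K →
      (∃ C : ℝ, 0 < C ∧ ∃ q : ℕ, 0 < q ∧
        ∀ ρ : ℕ → ℝ, (∀ i < m, 0 < ρ i) → (∑ i ∈ Finset.range m, ρ i = 1) →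
          freqProj m ρ ∈ K → ∀ y ∈ mFreqSet m ρ,
            C * Metric.infDist (freqProj m ρ) {p' ∈ V' | Δ p' = H x} ^ q ≤ |H y - H x|) ∧
      (∀ ρ : ℕ → ℝ, (∀ i < m, 0 < ρ i) → (∑ i ∈ Finset.range m, ρ i = 1) →
        ∀ y ∈ mFreqSet m ρ, H y = H x → freqProj m ρ ∈ {p' ∈ V' | Δ p' = H x}) :=
  Hm_oscillation_general m γ hγpos hγsum hγsup θ hθ V' hV' Δ hΔ hΔan Q hQ H hH
end

section
/- Let h ∈ (θ, ∞) be the unique zero of the countable-alphabet pressure P. Then for every s_* ∈ (θ, h) there exists an integer N such that for all n > N one has ∑_{i≥1} (N_i(n)/n) · log(∑_{j=1}^∞ γ_{ij}^{s_*}) > 0 (equivalently ∑_{σ∈ℕ^n} c_σ^{s_*} > 1), and for every s^* ∈ (h, ∞) there exists an integer N′ such that for all n > N′ one has ∑_{i≥1} (N_i(n)/n) · log(∑_{j=1}^∞ γ_{ij}^{s^*}) < 0 (equivalently ∑_{σ∈ℕ^n} c_σ^{s^*} < 1). -/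
/-!
The partition sum factorises: `∑_{σ ∈ ℕⁿ} c_σ^t = ∏_{k<n} Z_{ω_k}(t) = exp (n Pₙ(t))`, where
`Zᵢ(t) = ∑ⱼ γᵢⱼ^t` and `Pₙ` is the pressure with `η` replaced by the letter frequencies
`Nᵢ(n)/n`. Both are probability vectors and the frequencies converge to `η` pointwise, hence in
`ℓ¹` (Scheffé); as `log Zᵢ(t)` is bounded in `i`, `Pₙ(t) → P(t)`. Since every `γᵢⱼ < 1`, `P` is
strictly decreasing, so `P(t)`, and eventually `Pₙ(t)`, has the sign of `h - t`.
-/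

open Real Filter Finset Topology

section Scheffe

variable {α ι : Type*} {l : Filter α} {a : α → ι → ℝ} {η : ι → ℝ}

theorem Summable.mul_of_abs_le {f L : ι → ℝ} {M : ℝ} (hf : Summable f) (hL : ∀ i, |L i| ≤ M) :
    Summable fun i => f i * L i :=
  hf.abs.mul_right M |>.of_norm_bounded fun i => by
    rw [Real.norm_eq_abs, abs_mul]; exact mul_le_mul_of_nonneg_left (hL i) (abs_nonneg _)

theorem tendsto_tsum_abs_sub_of_tendsto (ha : ∀ n i, 0 ≤ a n i) (has : ∀ n, Summable (a n))
    (hη : Summable η) (hsum : ∀ᶠ n in l, ∑' i, a n i = ∑' i, η i)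
    (hconv : ∀ i, Tendsto (a · i) l (𝓝 (η i))) :
    Tendsto (fun n => ∑' i, |a n i - η i|) l (𝓝 0) := by
  have hdeficit_le (n i) : max (η i - a n i) 0 ≤ |η i| :=
    max_le (by linarith [ha n i, le_abs_self (η i)]) (abs_nonneg _)
  have hdeficit (n) : Summable fun i => max (η i - a n i) 0 :=
    hη.abs.of_nonneg_of_le (fun i => le_max_right _ _) (hdeficit_le n)
  -- Both sums being equal, the L¹ distance is twice the total deficit `∑ (η - aₙ)⁺`.
  have hdist : ∀ᶠ n in l, ∑' i, |a n i - η i| = 2 * ∑' i, max (η i - a n i) 0 := by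
    filter_upwards [hsum] with n hn
    have habs (i) : |a n i - η i| = (a n i - η i) + 2 * max (η i - a n i) 0 := by
      rcases le_total (a n i) (η i) with h | h
      · rw [abs_of_nonpos (by linarith), max_eq_left (by linarith)]; ring
      · rw [abs_of_nonneg (by linarith), max_eq_right (by linarith)]; ring
    rw [tsum_congr habs, Summable.tsum_add ((has n).sub hη) ((hdeficit n).mul_left 2),
      Summable.tsum_sub (has n) hη, hn, sub_self, zero_add, tsum_mul_left]
  have hdeficit_lim : Tendsto (fun n => ∑' i, max (η i - a n i) 0) l (𝓝 (∑' _ : ι, (0 : ℝ))) :=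
    tendsto_tsum_of_dominated_convergence hη.abs
      (fun i => by
        have h : Tendsto (fun n => max (η i - a n i) 0) l (𝓝 (max (η i - η i) 0)) :=
          (tendsto_const_nhds.sub (hconv i)).max tendsto_const_nhds
        simpa using h)
      (Eventually.of_forall fun n i => by
        rw [Real.norm_of_nonneg (le_max_right _ _)]; exact hdeficit_le n i)
  rw [tsum_zero] at hdeficit_lim
  simpa using (hdeficit_lim.const_mul 2).congr' (hdist.mono fun n hn => hn.symm)

theorem tendsto_tsum_mul_of_tendsto (ha : ∀ n i, 0 ≤ a n i) (has : ∀ n, Summable (a n))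
    (hη : Summable η) (hsum : ∀ᶠ n in l, ∑' i, a n i = ∑' i, η i)
    (hconv : ∀ i, Tendsto (a · i) l (𝓝 (η i))) {L : ι → ℝ} {M : ℝ} (hL : ∀ i, |L i| ≤ M) :
    Tendsto (fun n => ∑' i, a n i * L i) l (𝓝 (∑' i, η i * L i)) := by
  rw [tendsto_iff_norm_sub_tendsto_zero]
  refine squeeze_zero (fun n => norm_nonneg _) (fun n => ?_)
    (by simpa using (tendsto_tsum_abs_sub_of_tendsto ha has hη hsum hconv).const_mul M)
  rw [← Summable.tsum_sub ((has n).mul_of_abs_le hL) (hη.mul_of_abs_le hL)]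
  simp_rw [← sub_mul]
  refine tsum_of_norm_bounded (((has n).sub hη).abs.hasSum.mul_left M) fun i => ?_
  rw [Real.norm_eq_abs, abs_mul, mul_comm]
  exact mul_le_mul_of_nonneg_right (hL i) (abs_nonneg _)

end Scheffe

theorem summable_norm_prod_and_tsum_prod {R β : Type*} [NormedCommRing R] [NormMulClass R]
    [CompleteSpace R] {n : ℕ} {f : Fin n → β → R} (hf : ∀ k, Summable fun j => ‖f k j‖) :
      (Summable fun σ : Fin n → β => ‖∏ k, f k (σ k)‖) ∧
        ∑' σ : Fin n → β, ∏ k, f k (σ k) = ∏ k, ∑' j, f k j := by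
  induction n with
  | zero => exact ⟨Summable.of_finite, by simp⟩
  | succ n ih =>
    obtain ⟨htail, htail_eq⟩ := ih (f := fun k => f k.succ) fun k => hf k.succ
    have hhead : Summable fun j => ‖‖f 0 j‖‖ := by simpa only [norm_norm] using hf 0
    have htail' : Summable fun τ : Fin n → β => ‖‖∏ k, f k.succ (τ k)‖‖ := by
      simpa only [norm_norm] using htail
    have hpair := summable_mul_of_summable_norm (R := ℝ) hhead htail'
    let e := (Fin.consEquiv fun _ : Fin (n + 1) => β).symm
    have hsplit (σ : Fin (n + 1) → β) :
        ∏ k, f k (σ k) = f 0 (e σ).1 * ∏ k, f k.succ ((e σ).2 k) :=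
      Fin.prod_univ_succ _
    constructor
    · refine (e.summable_iff.mpr hpair).congr fun σ => ?_
      simp only [Function.comp_apply, hsplit, norm_mul]
    · rw [← e.symm.tsum_eq]
      simp only [hsplit, Equiv.apply_symm_apply]
      rw [← tsum_mul_tsum_of_summable_norm (hf 0) htail, htail_eq, Fin.prod_univ_succ]

theorem tsum_card_filter_mul {α β : Type*} [DecidableEq β] (s : Finset α) (g : α → β)
    (f : β → ℝ) : ∑' b, (#{a ∈ s | g a = b} : ℝ) * f b = ∑ a ∈ s, f (g a) := by
  rw [Finset.sum_comp, tsum_eq_sum (s := s.image g) fun b hb => ?_]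
  · simp only [nsmul_eq_mul]
  · simp only [Finset.mem_image, not_exists, not_and] at hb
    simp [Finset.filter_eq_empty_iff.mpr hb]

/-- `Nᵢ(n)/n`, with the junk value `0` at `n = 0`. -/
noncomputable def letterFreq {β : Type*} [DecidableEq β] (ω : ℕ → β) (n : ℕ) (i : β) : ℝ :=
  #{l ∈ range n | ω l = i} / n

noncomputable def pressure {ι α : Type*} (η : ι → ℝ) (γ : ι → α → ℝ) (t : ℝ) : ℝ :=
  ∑' i, η i * log (∑' j, γ i j ^ t)

section letterFreq

variable {β : Type*} [DecidableEq β] (ω : ℕ → β)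

theorem summable_letterFreq (n : ℕ) : Summable (letterFreq ω n) :=
  summable_of_ne_finset_zero (s := (range n).image ω) fun i hi => by
    simp only [Finset.mem_image, not_exists, not_and] at hi
    simp [letterFreq, Finset.filter_eq_empty_iff.mpr hi]

theorem tsum_letterFreq {n : ℕ} (hn : n ≠ 0) : ∑' i, letterFreq ω n i = 1 := by
  have h := tsum_card_filter_mul (range n) ω fun _ => (n : ℝ)⁻¹
  simp only [sum_const, card_range, nsmul_eq_mul] at h
  simp only [letterFreq, div_eq_mul_inv, h]
  exact mul_inv_cancel₀ (Nat.cast_ne_zero.mpr hn)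

theorem tendsto_pressure_letterFreq {α : Type*} {η : β → ℝ} {γ : β → α → ℝ} {t M : ℝ}
    (hη : Summable η) (hη1 : ∑' i, η i = 1)
    (hfreq : ∀ i, Tendsto (fun n => letterFreq ω n i) atTop (𝓝 (η i)))
    (hM : ∀ i, |log (∑' j, γ i j ^ t)| ≤ M) :
    Tendsto (fun n => pressure (letterFreq ω n) γ t) atTop (𝓝 (pressure η γ t)) :=
  tendsto_tsum_mul_of_tendsto (fun n i => by unfold letterFreq; positivity)
    (summable_letterFreq ω) hη
    (by filter_upwards [eventually_ne_atTop 0] with n hn; rw [tsum_letterFreq ω hn, hη1])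
    hfreq hM

end letterFreq

theorem tsum_rpow_lt_tsum_rpow {α : Type*} [Nonempty α] {g : α → ℝ} (hg0 : ∀ j, 0 < g j)
    (hg1 : ∀ j, g j < 1) {s u : ℝ} (hsu : s < u) (hs : Summable fun j => g j ^ s)
    (hu : Summable fun j => g j ^ u) : ∑' j, g j ^ u < ∑' j, g j ^ s :=
  have hlt (j) : g j ^ u < g j ^ s := rpow_lt_rpow_of_exponent_gt (hg0 j) (hg1 j) hsu
  hu.tsum_lt_tsum (fun j => (hlt j).le) (hlt (Classical.arbitrary α)) hs

theorem strictAntiOn_pressure {ι α : Type*} [Nonempty ι] [Nonempty α] {η : ι → ℝ}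
    {γ : ι → α → ℝ} {S : Set ℝ} (hη0 : ∀ i, 0 < η i) (hη : Summable η)
    (hγ0 : ∀ i j, 0 < γ i j) (hγ1 : ∀ i j, γ i j < 1)
    (hS : ∀ t ∈ S, ∃ M, ∀ i, Summable (fun j => γ i j ^ t) ∧ |log (∑' j, γ i j ^ t)| ≤ M) :
    StrictAntiOn (pressure η γ) S := by
  intro s hsS u huS hsu
  obtain ⟨Ms, hMs⟩ := hS s hsS
  obtain ⟨Mu, hMu⟩ := hS u huS
  have hlog (i) : log (∑' j, γ i j ^ u) < log (∑' j, γ i j ^ s) :=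
    log_lt_log ((hMu i).1.tsum_pos (fun j => (rpow_pos_of_pos (hγ0 i j) u).le)
        (Classical.arbitrary α) (rpow_pos_of_pos (hγ0 i _) u))
      (tsum_rpow_lt_tsum_rpow (hγ0 i) (hγ1 i) hsu (hMs i).1 (hMu i).1)
  exact (hη.mul_of_abs_le fun i => (hMu i).2).tsum_lt_tsum
    (fun i => mul_le_mul_of_nonneg_left (hlog i).le (hη0 i).le)
    (mul_lt_mul_of_pos_left (hlog (Classical.arbitrary ι)) (hη0 _))
    (hη.mul_of_abs_le fun i => (hMs i).2)

theorem tsum_prod_rpow_eq_exp {α β : Type*} [Nonempty α] [DecidableEq β] {γ : β → α → ℝ}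
    {t : ℝ} (hγ : ∀ i j, 0 < γ i j) (hs : ∀ i, Summable fun j => γ i j ^ t) (ω : ℕ → β)
    (n : ℕ) :
    ∑' σ : Fin n → α, (∏ k : Fin n, γ (ω k) (σ k)) ^ t =
      exp (n * pressure (letterFreq ω n) γ t) := by
  have hZ (i) : 0 < ∑' j, γ i j ^ t :=
    (hs i).tsum_pos (fun j => (rpow_pos_of_pos (hγ i j) t).le) (Classical.arbitrary α)
      (rpow_pos_of_pos (hγ i _) t)
  have hnorm (i) : Summable fun j => ‖γ i j ^ t‖ := by
    simpa only [Real.norm_of_nonneg (rpow_pos_of_pos (hγ i _) t).le] using hs i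
  calc ∑' σ : Fin n → α, (∏ k : Fin n, γ (ω k) (σ k)) ^ t
      = ∏ k : Fin n, ∑' j, γ (ω k) j ^ t := by
        simp_rw [← Real.finsetProd_rpow _ _ fun k _ => (hγ _ _).le]
        exact (summable_norm_prod_and_tsum_prod fun k => hnorm (ω k)).2
    _ = exp (∑ k ∈ range n, log (∑' j, γ (ω k) j ^ t)) := by
        rw [exp_sum, Fin.prod_univ_eq_prod_range (fun k => ∑' j, γ (ω k) j ^ t)]
        simp only [exp_log (hZ _)]
    _ = exp (∑' i, (#{l ∈ range n | ω l = i} : ℝ) * log (∑' j, γ i j ^ t)) := by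
        rw [tsum_card_filter_mul]
    _ = _ := by
        rcases n.eq_zero_or_pos with rfl | hn
        · simp
        · simp_rw [pressure, letterFreq, div_mul_eq_mul_div, tsum_div_const]
          rw [mul_div_cancel₀ _ (Nat.cast_ne_zero.mpr hn.ne')]


theorem countable_pressure_partition_sums_general
    (η : ℕ → ℝ) (hηpos : ∀ i, 0 < η i)
    (hηsum : Summable η) (hη1 : ∑' i, η i = 1)
    (ω : ℕ → ℕ)
    (hfreq : ∀ i, Tendsto
      (fun n => (((Finset.range n).filter (fun k => ω k = i)).card : ℝ) / n)
      atTop (nhds (η i)))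
    (γ : ℕ → ℕ → ℝ) (hγpos : ∀ i j, 0 < γ i j)
    (hγsup : ∃ C : ℝ, C < 1 ∧ ∀ i j, γ i j ≤ C)
    (θ : ℝ)
    (hbound : ∀ t : ℝ, θ < t → ∃ M : ℝ, ∀ i,
      Summable (fun j => γ i j ^ t) ∧ |Real.log (∑' j, γ i j ^ t)| ≤ M)
    (P : ℝ → ℝ)
    (hP : ∀ t : ℝ, P t = ∑' i : ℕ, η i * Real.log (∑' j, γ i j ^ t))
    (h : ℝ) (hh : h ∈ Set.Ioi θ ∧ P h = 0) :
    (∀ sstar ∈ Set.Ioo θ h, ∃ N : ℕ, ∀ n : ℕ, N < n →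
      0 < (∑' i : ℕ, (((Finset.range n).filter (fun l => ω l = i)).card : ℝ) / n *
            Real.log (∑' j, γ i j ^ sstar)) ∧
      1 < ∑' σ : Fin n → ℕ, (∏ k : Fin n, γ (ω k) (σ k)) ^ sstar) ∧
    (∀ shigh ∈ Set.Ioi h, ∃ N' : ℕ, ∀ n : ℕ, N' < n →
      (∑' i : ℕ, (((Finset.range n).filter (fun l => ω l = i)).card : ℝ) / n *
            Real.log (∑' j, γ i j ^ shigh)) < 0 ∧
      (∑' σ : Fin n → ℕ, (∏ k : Fin n, γ (ω k) (σ k)) ^ shigh) < 1) := by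
  obtain rfl : P = pressure η γ := funext hP
  obtain ⟨C, hC1, hγC⟩ := hγsup
  have hanti : StrictAntiOn (pressure η γ) (Set.Ioi θ) :=
    strictAntiOn_pressure hηpos hηsum hγpos (fun i j => (hγC i j).trans_lt hC1) hbound
  have hlim (t : ℝ) (ht : θ < t) :
      Tendsto (fun n => pressure (letterFreq ω n) γ t) atTop (𝓝 (pressure η γ t)) := by
    obtain ⟨M, hM⟩ := hbound t ht
    exact tendsto_pressure_letterFreq ω hηsum hη1 hfreq fun i => (hM i).2
  have hZ (t : ℝ) (ht : θ < t) (n : ℕ) :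
      ∑' σ : Fin n → ℕ, (∏ k : Fin n, γ (ω k) (σ k)) ^ t =
        exp (n * pressure (letterFreq ω n) γ t) := by
    obtain ⟨M, hM⟩ := hbound t ht
    exact tsum_prod_rpow_eq_exp hγpos (fun i => (hM i).1) ω n
  constructor
  · rintro s ⟨hθs, hsh⟩
    have hpos : 0 < pressure η γ s := hh.2 ▸ hanti hθs hh.1 hsh
    obtain ⟨N, hN⟩ := ((hlim s hθs).eventually (lt_mem_nhds hpos)).exists_forall_of_atTop
    refine ⟨N, fun n hn => ⟨hN n hn.le, ?_⟩⟩
    rw [hZ s hθs, one_lt_exp_iff]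
    exact mul_pos (Nat.cast_pos.mpr (N.zero_le.trans_lt hn)) (hN n hn.le)
  · intro s hhs
    have hθs : θ < s := hh.1.trans hhs
    have hneg : pressure η γ s < 0 := hh.2 ▸ hanti hh.1 hθs hhs
    obtain ⟨N, hN⟩ := ((hlim s hθs).eventually (gt_mem_nhds hneg)).exists_forall_of_atTop
    refine ⟨N, fun n hn => ⟨hN n hn.le, ?_⟩⟩
    rw [hZ s hθs, exp_lt_one_iff]
    exact mul_neg_of_pos_of_neg (Nat.cast_pos.mpr (N.zero_le.trans_lt hn)) (hN n hn.le)

/-- (Countable alphabet.) If `h ∈ (θ, ∞)` is the unique zero of the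
countable-alphabet pressure `P`, then for `s_* ∈ (θ, h)` eventually
`∑ᵢ (Nᵢ(n)/n) · log (∑ⱼ γᵢⱼ^{s_*}) > 0` (equivalently `∑_{σ∈ℕⁿ} c_σ^{s_*} > 1`), and for
`s^* ∈ (h, ∞)` eventually `∑ᵢ (Nᵢ(n)/n) · log (∑ⱼ γᵢⱼ^{s^*}) < 0`
(equivalently `∑_{σ∈ℕⁿ} c_σ^{s^*} < 1`). -/
theorem countable_pressure_partition_sums
    (η : ℕ → ℝ) (hηpos : ∀ i, 0 < η i)
    (hηsum : Summable η) (hη1 : ∑' i, η i = 1)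
    (ω : ℕ → ℕ)
    (hfreq : ∀ i, Tendsto
      (fun n => (((Finset.range n).filter (fun k => ω k = i)).card : ℝ) / n)
      atTop (nhds (η i)))
    (γ : ℕ → ℕ → ℝ) (hγpos : ∀ i j, 0 < γ i j)
    (hγsum : ∃ B : ℝ, ∀ i, Summable (fun j => γ i j) ∧ ∑' j, γ i j ≤ B)
    (hγsup : ∃ C : ℝ, C < 1 ∧ ∀ i j, γ i j ≤ C)
    (θ : ℝ)
    (hθ : θ = sInf {t : ℝ | 0 < t ∧
      ∃ B : ℝ, ∀ i, Summable (fun j => γ i j ^ t) ∧ ∑' j, γ i j ^ t ≤ B})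
    (hbound : ∀ t : ℝ, θ < t → ∃ M : ℝ, ∀ i,
      Summable (fun j => γ i j ^ t) ∧ |Real.log (∑' j, γ i j ^ t)| ≤ M)
    (P : ℝ → ℝ)
    (hP : ∀ t : ℝ, P t = ∑' i : ℕ, η i * Real.log (∑' j, γ i j ^ t))
    (hu : ∃ u ∈ Set.Ioi θ, 0 < P u)
    (h : ℝ) (hh : h ∈ Set.Ioi θ ∧ P h = 0) :
    (∀ sstar ∈ Set.Ioo θ h, ∃ N : ℕ, ∀ n : ℕ, N < n →
      0 < (∑' i : ℕ, (((Finset.range n).filter (fun l => ω l = i)).card : ℝ) / n *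
            Real.log (∑' j, γ i j ^ sstar)) ∧
      1 < ∑' σ : Fin n → ℕ, (∏ k : Fin n, γ (ω k) (σ k)) ^ sstar) ∧
    (∀ shigh ∈ Set.Ioi h, ∃ N' : ℕ, ∀ n : ℕ, N' < n →
      (∑' i : ℕ, (((Finset.range n).filter (fun l => ω l = i)).card : ℝ) / n *
            Real.log (∑' j, γ i j ^ shigh)) < 0 ∧
      (∑' σ : Fin n → ℕ, (∏ k : Fin n, γ (ω k) (σ k)) ^ shigh) < 1) :=
  countable_pressure_partition_sums_general η hηpos hηsum hη1 ω hfreq γ hγpos hγsup θ hbound P hP h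
    hh
end
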